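/- arXiv:2307.04708 — 3 statements merged into one kernel-verified Lean document; each statement's English description precedes it below -/
import Mathlib

section
/- Let t ∈ ℝ and let u be a real number with 0 < u < 1/2. Then both integrals ∫₀^∞ e^{−ux} K₀(x,t) dx and ∫₀^∞ e^{ux} K₀(x,t) dx converge, and ∫₀^∞ e^{−ux} K₀(x,t) dx − ∫₀^∞ e^{ux} K₀(x,t) dx = −4π·cosh(tu)/sin(2πu) + 2/u. -/
/-!
Write `g y = 1 / (1 + exp (y / 2))`, so that `K₀(x, t) = g (x + t) + g (x - t)` and
`g y + g (-y) = 1`. Reflecting `x ↦ -x` and using this symmetry,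
`∫₀^∞ e^{-ux} g (x + a) - ∫₀^∞ e^{ux} g (x - a) = 1/u - ∫_ℝ e^{uy} g (y - a) dy`,
and the whole-line integral is `e^{ua} · 2π / sin (2πu)`: substituting `y = 2w` and then
`x = sigmoid w` turns it into the beta integral
`B(2u, 1 - 2u) = Γ(2u) Γ(1 - 2u) = π / sin (2πu)`.
Adding the cases `a = t` and `a = -t` produces the `cosh`.
-/

open Real MeasureTheory

/-- Mirzakhani's recursion kernel. -/
noncomputable def K0 (x t : ℝ) : ℝ :=
  1 / (1 + Real.exp ((x + t) / 2)) + 1 / (1 + Real.exp ((x - t) / 2))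

open Set

lemma ofReal_rpow_mul_one_sub_rpow {x : ℝ} (hx : x ∈ Icc (0:ℝ) 1) (a b : ℝ) :
    ((x ^ (a - 1) * (1 - x) ^ (b - 1) : ℝ) : ℂ) =
      (x : ℂ) ^ ((a : ℂ) - 1) * (1 - (x : ℂ)) ^ ((b : ℂ) - 1) := by
  rw [Complex.ofReal_mul, Complex.ofReal_cpow hx.1, Complex.ofReal_cpow (sub_nonneg.2 hx.2)]
  push_cast
  rfl

lemma betaIntegral_ofReal (a b : ℝ) :
    Complex.betaIntegral a b = ↑(∫ x in (0:ℝ)..1, x ^ (a - 1) * (1 - x) ^ (b - 1)) := by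
  rw [Complex.betaIntegral, ← intervalIntegral.integral_ofReal]
  refine intervalIntegral.integral_congr fun x hx => ?_
  rw [uIcc_of_le zero_le_one] at hx
  exact (ofReal_rpow_mul_one_sub_rpow hx a b).symm

lemma integrableOn_rpow_mul_one_sub_rpow {a b : ℝ} (ha : 0 < a) (hb : 0 < b) :
    IntegrableOn (fun x : ℝ => x ^ (a - 1) * (1 - x) ^ (b - 1)) (Ioo 0 1) := by
  have h := Complex.betaIntegral_convergent (u := a) (v := b) (by simpa) (by simpa)
  rw [intervalIntegrable_iff_integrableOn_Ioo_of_le zero_le_one] at h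
  refine IntegrableOn.congr_fun h.re (fun x hx => ?_) measurableSet_Ioo
  rw [← ofReal_rpow_mul_one_sub_rpow (Ioo_subset_Icc_self hx)]
  rfl

lemma integral_rpow_mul_one_sub_rpow {a b : ℝ} (ha : 0 < a) (hb : 0 < b) :
    ∫ x in Ioo (0:ℝ) 1, x ^ (a - 1) * (1 - x) ^ (b - 1) =
      Gamma a * Gamma b / Gamma (a + b) := by
  have h := Complex.betaIntegral_eq_Gamma_mul_div a b (by simpa) (by simpa)
  rw [betaIntegral_ofReal, ← Complex.ofReal_add, Complex.Gamma_ofReal, Complex.Gamma_ofReal,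
    Complex.Gamma_ofReal, ← Complex.ofReal_mul, ← Complex.ofReal_div, Complex.ofReal_inj,
    intervalIntegral.integral_of_le zero_le_one, integral_Ioc_eq_integral_Ioo] at h
  exact h

lemma sigmoid_rpow_mul_one_sub_sigmoid_rpow (s w : ℝ) :
    sigmoid w ^ s * (1 - sigmoid w) ^ (1 - s) = exp (s * w) / (1 + exp w) := by
  have hc : 0 < (1 + exp w)⁻¹ := by positivity
  have h1 : 1 - sigmoid w = (1 + exp w)⁻¹ := by rw [← sigmoid_neg, sigmoid_def, neg_neg]
  have h2 : sigmoid w = exp w * (1 + exp w)⁻¹ := by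
    rw [sigmoid_def, exp_neg]
    field_simp
    ring
  rw [h1, h2, mul_rpow (exp_pos w).le hc.le, mul_assoc, ← rpow_add hc, add_sub_cancel, rpow_one,
    ← exp_mul, mul_comm w, div_eq_mul_inv]

lemma abs_deriv_sigmoid_smul_rpow_mul_one_sub_rpow (s w : ℝ) :
    |sigmoid w * (1 - sigmoid w)| • (sigmoid w ^ (s - 1) * (1 - sigmoid w) ^ ((1 - s) - 1))
      = exp (s * w) / (1 + exp w) := by
  have h0 := sigmoid_pos w
  have h1 : 0 < 1 - sigmoid w := sub_pos.2 (sigmoid_lt_one w)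
  rw [← sigmoid_rpow_mul_one_sub_sigmoid_rpow, abs_of_pos (mul_pos h0 h1), smul_eq_mul,
    rpow_sub_one h0.ne', rpow_sub_one h1.ne']
  field_simp

lemma integrable_exp_mul_div_one_add_exp {s : ℝ} (h0 : 0 < s) (h1 : s < 1) :
    Integrable fun w => exp (s * w) / (1 + exp w) := by
  have h := integrableOn_image_iff_integrableOn_abs_deriv_smul MeasurableSet.univ
    (fun w _ => (hasDerivAt_sigmoid w).hasDerivWithinAt) sigmoid_injective.injOn
    (fun x : ℝ => x ^ (s - 1) * (1 - x) ^ ((1 - s) - 1))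
  rw [image_univ, range_sigmoid] at h
  simpa only [abs_deriv_sigmoid_smul_rpow_mul_one_sub_rpow, integrableOn_univ] using
    h.1 (integrableOn_rpow_mul_one_sub_rpow h0 (sub_pos.2 h1))

lemma integral_exp_mul_div_one_add_exp {s : ℝ} (h0 : 0 < s) (h1 : s < 1) :
    ∫ w, exp (s * w) / (1 + exp w) = π / sin (π * s) := by
  have h := integral_image_eq_integral_abs_deriv_smul MeasurableSet.univ
    (fun w _ => (hasDerivAt_sigmoid w).hasDerivWithinAt) sigmoid_injective.injOn
    (fun x : ℝ => x ^ (s - 1) * (1 - x) ^ ((1 - s) - 1))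
  rw [image_univ, range_sigmoid, integral_rpow_mul_one_sub_rpow h0 (sub_pos.2 h1),
    add_sub_cancel, Gamma_one, div_one, Gamma_mul_Gamma_one_sub, setIntegral_univ] at h
  simpa only [abs_deriv_sigmoid_smul_rpow_mul_one_sub_rpow] using h.symm

noncomputable def kernelTerm (y : ℝ) : ℝ := 1 / (1 + exp (y / 2))

lemma K0_eq_kernelTerm (x t : ℝ) : K0 x t = kernelTerm (x + t) + kernelTerm (x - t) := rfl

lemma kernelTerm_neg (y : ℝ) : kernelTerm (-y) = 1 - kernelTerm y := by
  have h := exp_pos (y / 2)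
  rw [kernelTerm, kernelTerm, neg_div, exp_neg]
  field_simp
  ring

@[fun_prop]
lemma continuous_kernelTerm : Continuous kernelTerm :=
  continuous_const.div (by fun_prop) fun y => by positivity

lemma kernelTerm_nonneg (y : ℝ) : 0 ≤ kernelTerm y := by
  unfold kernelTerm; positivity

lemma kernelTerm_le_one (y : ℝ) : kernelTerm y ≤ 1 := by
  unfold kernelTerm
  rw [div_le_one (by positivity)]
  linarith [exp_pos (y / 2)]

lemma exp_mul_kernelTerm (u y : ℝ) :
    exp (u * y) * kernelTerm y = exp (2 * u * (y / 2)) / (1 + exp (y / 2)) := by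
  rw [kernelTerm, mul_one_div]; ring_nf

lemma integrable_exp_mul_kernelTerm {u : ℝ} (hu0 : 0 < u) (hu1 : u < 1 / 2) :
    Integrable fun y => exp (u * y) * kernelTerm y := by
  simp_rw [exp_mul_kernelTerm]
  exact (integrable_exp_mul_div_one_add_exp (by positivity) (by linarith)).comp_div two_ne_zero

lemma integral_exp_mul_kernelTerm {u : ℝ} (hu0 : 0 < u) (hu1 : u < 1 / 2) :
    ∫ y, exp (u * y) * kernelTerm y = 2 * π / sin (2 * π * u) := by
  simp_rw [exp_mul_kernelTerm]
  rw [Measure.integral_comp_div (fun y => exp (2 * u * y) / (1 + exp y)),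
    integral_exp_mul_div_one_add_exp (by positivity) (by linarith), abs_two, smul_eq_mul,
    show π * (2 * u) = 2 * π * u by ring, mul_div_assoc]

lemma exp_mul_kernelTerm_sub (u a y : ℝ) :
    exp (u * y) * kernelTerm (y - a) = exp (u * a) * (exp (u * (y - a)) * kernelTerm (y - a)) := by
  rw [← mul_assoc, ← exp_add]; ring_nf

lemma integrable_exp_mul_kernelTerm_sub {u : ℝ} (hu0 : 0 < u) (hu1 : u < 1 / 2) (a : ℝ) :
    Integrable fun y => exp (u * y) * kernelTerm (y - a) := by
  simp_rw [exp_mul_kernelTerm_sub u a]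
  exact ((integrable_exp_mul_kernelTerm hu0 hu1).comp_sub_right a).const_mul _

lemma integral_exp_mul_kernelTerm_sub {u : ℝ} (hu0 : 0 < u) (hu1 : u < 1 / 2) (a : ℝ) :
    ∫ y, exp (u * y) * kernelTerm (y - a) = exp (u * a) * (2 * π / sin (2 * π * u)) := by
  simp_rw [exp_mul_kernelTerm_sub u a]
  rw [integral_const_mul, integral_sub_right_eq_self (fun y => exp (u * y) * kernelTerm y),
    integral_exp_mul_kernelTerm hu0 hu1]

lemma integrableOn_exp_neg_mul_kernelTerm_add {u : ℝ} (hu0 : 0 < u) (a : ℝ) :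
    IntegrableOn (fun x => exp (-u * x) * kernelTerm (x + a)) (Ioi 0) := by
  refine (exp_neg_integrableOn_Ioi 0 hu0).mono' (by fun_prop) (ae_of_all _ fun x => ?_)
  rw [norm_mul, norm_of_nonneg (exp_pos _).le, norm_of_nonneg (kernelTerm_nonneg _)]
  exact mul_le_of_le_one_right (exp_pos _).le (kernelTerm_le_one _)

lemma exp_mul_neg_mul_kernelTerm_neg_sub (u a x : ℝ) :
    exp (u * -x) * kernelTerm (-x - a) = exp (-u * x) - exp (-u * x) * kernelTerm (x + a) := by
  rw [show -x - a = -(x + a) by ring, kernelTerm_neg, neg_mul_comm]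
  ring

lemma setIntegral_exp_neg_mul_kernelTerm_add_sub {u : ℝ} (hu0 : 0 < u) (hu1 : u < 1 / 2)
    (a : ℝ) :
    (∫ x in Ioi 0, exp (-u * x) * kernelTerm (x + a)) -
      ∫ x in Ioi 0, exp (u * x) * kernelTerm (x - a) =
      1 / u - exp (u * a) * (2 * π / sin (2 * π * u)) := by
  have hf := integrable_exp_mul_kernelTerm_sub hu0 hu1 a
  have hsplit := intervalIntegral.integral_Iic_add_Ioi (b := 0) hf.integrableOn hf.integrableOn
  rw [integral_exp_mul_kernelTerm_sub hu0 hu1, ← neg_zero, ← integral_comp_neg_Ioi] at hsplit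
  simp_rw [exp_mul_neg_mul_kernelTerm_neg_sub] at hsplit
  rw [integral_sub (exp_neg_integrableOn_Ioi 0 hu0) (integrableOn_exp_neg_mul_kernelTerm_add hu0 a),
    integral_exp_mul_Ioi (neg_neg_of_pos hu0), mul_zero, exp_zero, neg_zero] at hsplit
  rw [← hsplit, neg_div_neg_eq]
  ring

theorem stmt0 (t u : ℝ) (hu0 : 0 < u) (hu1 : u < 1 / 2) :
    IntegrableOn (fun x => Real.exp (-u * x) * K0 x t) (Set.Ioi 0) ∧
    IntegrableOn (fun x => Real.exp (u * x) * K0 x t) (Set.Ioi 0) ∧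
    (∫ x in Set.Ioi (0:ℝ), Real.exp (-u * x) * K0 x t) -
      (∫ x in Set.Ioi (0:ℝ), Real.exp (u * x) * K0 x t) =
      -4 * π * Real.cosh (t * u) / Real.sin (2 * π * u) + 2 / u := by
  have hA := integrableOn_exp_neg_mul_kernelTerm_add hu0
  have hB a := (integrable_exp_mul_kernelTerm_sub hu0 hu1 a).integrableOn (s := Ioi 0)
  have hK_add (x : ℝ) : exp (-u * x) * K0 x t =
      exp (-u * x) * kernelTerm (x + t) + exp (-u * x) * kernelTerm (x + -t) := by
    rw [K0_eq_kernelTerm, sub_eq_add_neg, mul_add]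
  have hK_sub (x : ℝ) : exp (u * x) * K0 x t =
      exp (u * x) * kernelTerm (x - -t) + exp (u * x) * kernelTerm (x - t) := by
    rw [K0_eq_kernelTerm, sub_neg_eq_add, mul_add]
  simp_rw [hK_add, hK_sub]
  refine ⟨(hA t).add (hA (-t)), (hB (-t)).add (hB t), ?_⟩
  rw [integral_add (hA t) (hA (-t)), integral_add (hB (-t)) (hB t), cosh_eq, mul_comm t u,
    ← mul_neg]
  linear_combination setIntegral_exp_neg_mul_kernelTerm_add_sub hu0 hu1 t +
    setIntegral_exp_neg_mul_kernelTerm_add_sub hu0 hu1 (-t)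
end

section
/- For every integer i ≥ 1 and every t ∈ ℝ, ∫₀^∞ (x^{2i−1}/(2i−1)!) · K₀(x,t) dx = ∑_{m=0}^{i} β_m · t^{2i−2m}/(2i−2m)!. -/
open Real MeasureTheory

/-!
Write `K₀(x, t) = f(x + t) + f(x - t)` with `f u = 1 / (1 + e^{u/2})`. After shifting, the
symmetry `f(-u) = 1 - f(u)` collapses the parts of the two integrals over `(-|t|, |t|)` to
`t^{2i} / (2i)`, and the binomial theorem reduces the rest to the odd moments of `f`.
Expanding `f` as a geometric series in `e^{-u/2}` gives
`∫₀^∞ u^{2m-1} / (2m-1)! f(u) du = (4^m - 2) ζ(2m)`, a multiple of the Bernoulli number `B_{2m}`.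
The identity `(B(2x) - 2B(x)) (eˣ - e⁻ˣ) = -2x` for `B(x) = x / (eˣ - 1)` shows that twice these
moments satisfy the recursion defining `β`, which determines `β` uniquely.
-/

open Nat

theorem Finset.sum_range_two_mul_of_odd_eq_zero {M : Type*} [AddCommMonoid M] {f : ℕ → M}
    (hf : ∀ j, Odd j → f j = 0) (n : ℕ) :
    ∑ j ∈ Finset.range (2 * n), f j = ∑ k ∈ Finset.range n, f (2 * k) := by
  induction n with
  | zero => simp
  | succ n ih =>
    rw [Nat.mul_succ, Finset.sum_range_succ, Finset.sum_range_succ, ih, Finset.sum_range_succ,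
      hf _ (odd_two_mul_add_one n), add_zero]

namespace PowerSeries

theorem rescale_two_bernoulliPowerSeries_mul_exp_sq_sub_one :
    rescale (2 : ℚ) (bernoulliPowerSeries ℚ) * (exp ℚ ^ 2 - 1) = C (2 : ℚ) * X := by
  have hsq : exp ℚ ^ 2 = rescale (2 : ℚ) (exp ℚ) := by
    simpa using exp_pow_eq_rescale_exp (A := ℚ) 2
  rw [← rescale_X, ← bernoulliPowerSeries_mul_exp_sub_one ℚ, map_mul, map_sub, map_one, hsq]

theorem rescale_two_bernoulliPowerSeries_mul_exp_add_one :
    rescale (2 : ℚ) (bernoulliPowerSeries ℚ) * (exp ℚ + 1) =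
      C (2 : ℚ) * bernoulliPowerSeries ℚ := by
  have hne : exp ℚ - 1 ≠ 0 := fun h => by simpa [coeff_exp] using congrArg (coeff 1) h
  refine mul_right_cancel₀ hne ?_
  linear_combination rescale_two_bernoulliPowerSeries_mul_exp_sq_sub_one -
    C (2 : ℚ) * bernoulliPowerSeries_mul_exp_sub_one ℚ

/-- With `B(x) = x / (eˣ - 1)`, this is `(B(2x) - 2B(x)) (eˣ - e⁻ˣ) = -2x`. -/
theorem rescale_two_bernoulliPowerSeries_sub_mul_exp_sub_exp_neg :
    (rescale (2 : ℚ) (bernoulliPowerSeries ℚ) - C (2 : ℚ) * bernoulliPowerSeries ℚ) *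
      (exp ℚ - evalNegHom (exp ℚ)) = -(C (2 : ℚ) * X) := by
  linear_combination
    (exp ℚ - evalNegHom (exp ℚ)) * rescale_two_bernoulliPowerSeries_mul_exp_add_one -
    rescale_two_bernoulliPowerSeries_mul_exp_sq_sub_one +
    rescale (2 : ℚ) (bernoulliPowerSeries ℚ) * exp_mul_exp_neg_eq_one (A := ℚ)

end PowerSeries

open PowerSeries in
theorem sum_range_four_pow_sub_two_mul_bernoulli_div_eq_zero {p : ℕ} (hp : p ≠ 0) :
    ∑ q ∈ Finset.range (p + 1),
      ((4 : ℚ) ^ q - 2) * bernoulli (2 * q) / ((2 * q)! * (2 * (p - q) + 1)!) = 0 := by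
  set H := rescale (2 : ℚ) (bernoulliPowerSeries ℚ) - C (2 : ℚ) * bernoulliPowerSeries ℚ
  have coeff_H (j : ℕ) : coeff j H = ((2 : ℚ) ^ j - 2) * bernoulli j / j ! := by
    simp only [H, map_sub, coeff_rescale, coeff_C_mul, bernoulliPowerSeries, coeff_mk,
      Algebra.algebraMap_self, RingHom.id_apply]
    ring
  -- `H` is even: `B₁ = -1/2` is killed by the factor `2 ^ 1 - 2`, the other odd `Bⱼ` vanish.
  have coeff_H_odd (j : ℕ) (hj : Odd j) : coeff j H = 0 := by
    obtain rfl | hj1 := eq_or_ne j 1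
    · simp [coeff_H]
    · rw [coeff_H, bernoulli_eq_zero_of_odd hj (by grind), mul_zero, zero_div]
  have coeff_sinh (b : ℕ) (hb : Odd b) :
      coeff b (exp ℚ - evalNegHom (exp ℚ)) = 2 / b ! := by
    rw [map_sub, show evalNegHom (exp ℚ) = rescale (-1 : ℚ) (exp ℚ) from rfl, coeff_rescale,
      coeff_exp, hb.neg_one_pow]
    simp only [Algebra.algebraMap_self, RingHom.id_apply]
    ring
  have h := congrArg (coeff (2 * p + 1)) rescale_two_bernoulliPowerSeries_sub_mul_exp_sub_exp_neg
  rw [coeff_mul, Finset.Nat.sum_antidiagonal_eq_sum_range_succ (fun i j => coeff i H * coeff j _),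
    map_neg, coeff_C_mul, coeff_X, if_neg (by omega), mul_zero, neg_zero,
    show (2 * p + 1).succ = 2 * (p + 1) by omega,
    Finset.sum_range_two_mul_of_odd_eq_zero
      (fun j hj => by simp only [coeff_H_odd j hj, zero_mul])] at h
  rw [← mul_right_inj' (two_ne_zero (α := ℚ)), mul_zero, ← h, Finset.mul_sum]
  refine Finset.sum_congr rfl fun q hq => ?_
  have hq : q ≤ p := Nat.lt_succ_iff.mp (Finset.mem_range.mp hq)
  rw [coeff_H, show 2 * p + 1 - 2 * q = 2 * (p - q) + 1 by omega,
    coeff_sinh _ (odd_two_mul_add_one _), pow_mul]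
  norm_num
  ring

theorem eq_of_sum_range_mul_sub_eq_zero {R : Type*} [Ring R] {c a b : ℕ → R} (hc : c 0 = 1)
    (h0 : a 0 = b 0) (ha : ∀ p, 1 ≤ p → ∑ m ∈ Finset.range (p + 1), c m * a (p - m) = 0)
    (hb : ∀ p, 1 ≤ p → ∑ m ∈ Finset.range (p + 1), c m * b (p - m) = 0) : a = b := by
  funext n
  induction n using Nat.strong_induction_on with
  | _ n ih =>
    obtain _ | p := n
    · exact h0
    · have ha' := ha (p + 1) le_add_self
      have hb' := hb (p + 1) le_add_self
      rw [Finset.sum_range_succ'] at ha' hb'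
      rw [Finset.sum_congr rfl fun m _ => by rw [ih (p + 1 - (m + 1)) (by omega)]] at ha'
      rw [hc, one_mul, Nat.sub_zero] at ha' hb'
      exact add_left_cancel (ha'.trans hb'.symm)

theorem pow_div_factorial_mul_doubleFactorial (y : ℝ) (m : ℕ) :
    y ^ m / ((m ! : ℝ) * ((2 * m + 1)‼ : ℝ)) = (2 * y) ^ m / (2 * m + 1)! := by
  have h : ((2 * m + 1)! : ℝ) = (2 * m + 1)‼ * (2 ^ m * m !) := by
    rw [Nat.factorial_eq_mul_doubleFactorial, Nat.doubleFactorial_two_mul]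
    push_cast
    ring
  rw [h, mul_pow]
  field_simp

/-- By Euler's formula for `ζ(2m)`, this is `2 (4 ^ m - 2) ζ(2m)` when `m ≥ 1`. -/
noncomputable def revMoment (m : ℕ) : ℝ :=
  (2 - 4 ^ m) * (-4 * π ^ 2) ^ m * bernoulli (2 * m) / (2 * m)!

theorem revMoment_zero : revMoment 0 = 1 := by
  norm_num [revMoment]

theorem sum_range_mul_revMoment_eq_zero {p : ℕ} (hp : 1 ≤ p) :
    ∑ m ∈ Finset.range (p + 1),
      ((-2 * π ^ 2) ^ m / ((Nat.factorial m : ℝ) * (Nat.doubleFactorial (2 * m + 1) : ℝ))) *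
        revMoment (p - m) = 0 := by
  have hB := congrArg (fun x : ℚ => (x : ℝ))
    (sum_range_four_pow_sub_two_mul_bernoulli_div_eq_zero (p := p) (by omega))
  push_cast at hB
  rw [← Finset.sum_range_reflect]
  calc _ = -(-4 * π ^ 2) ^ p * ∑ q ∈ Finset.range (p + 1),
        ((4 : ℝ) ^ q - 2) * bernoulli (2 * q) / ((2 * q)! * (2 * (p - q) + 1)!) := by
        rw [Finset.mul_sum]
        refine Finset.sum_congr rfl fun q hq => ?_
        have hq : q ≤ p := Nat.lt_succ_iff.mp (Finset.mem_range.mp hq)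
        rw [pow_div_factorial_mul_doubleFactorial, show p + 1 - 1 - q = p - q by omega,
          show p - (p - q) = q by omega, revMoment, show 2 * (-2 * π ^ 2) = -4 * π ^ 2 by ring]
        nth_rewrite 3 [show p = (p - q) + q by omega]
        field_simp
        ring
    _ = 0 := by rw [hB, mul_zero]

open Set Filter Topology Asymptotics

noncomputable def fermi (u : ℝ) : ℝ := 1 / (1 + exp (u / 2))

theorem K0_eq_fermi_add_fermi (x t : ℝ) : K0 x t = fermi (x + t) + fermi (x - t) := rfl

theorem fermi_neg (u : ℝ) : fermi (-u) = 1 - fermi u := by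
  have h := exp_pos (u / 2)
  rw [fermi, fermi, neg_div, exp_neg]
  field_simp
  ring

@[fun_prop]
theorem continuous_fermi : Continuous fermi :=
  continuous_const.div (by fun_prop) fun u => by positivity

theorem fermi_le_exp_neg (u : ℝ) : fermi u ≤ exp (-(u / 2)) := by
  rw [fermi, exp_neg, one_div]
  exact inv_anti₀ (exp_pos _) (by linarith [exp_pos (u / 2)])

theorem isBigO_fermi_comp_add (s : ℝ) :
    (fun u => fermi (u + s)) =O[atTop] fun u => exp (-(1 / 2) * u) := by
  refine IsBigO.of_bound (exp (-(s / 2))) (Eventually.of_forall fun u => ?_)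
  have h : 0 < fermi (u + s) := by unfold fermi; positivity
  rw [norm_of_nonneg h.le, norm_of_nonneg (exp_pos _).le, ← exp_add]
  exact (fermi_le_exp_neg _).trans_eq (by ring_nf)

theorem integrableOn_Ioi_pow_mul_fermi_comp_add (k : ℕ) (c s a : ℝ) :
    IntegrableOn (fun u => (u + c) ^ k * fermi (u + s)) (Ioi a) := by
  refine integrable_of_isBigO_exp_neg (b := 1 / 4) (by norm_num) (by fun_prop) ?_
  have hpow : (fun u : ℝ => (u + c) ^ k) =o[atTop] fun u => exp (1 / 4 * (u + c)) :=
    (isLittleO_pow_exp_pos_mul_atTop k (by norm_num)).comp_tendsto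
      (tendsto_atTop_add_const_right _ c tendsto_id)
  refine (hpow.isBigO.mul (isBigO_fermi_comp_add s)).trans
    (IsBigO.of_bound (exp (c / 4)) (Eventually.of_forall fun u => ?_))
  rw [norm_of_nonneg (by positivity), norm_of_nonneg (by positivity), ← exp_add, ← exp_add]
  exact le_of_eq (by ring_nf)

theorem integrableOn_Ioi_pow_mul_fermi (k : ℕ) (a : ℝ) :
    IntegrableOn (fun u => u ^ k * fermi u) (Ioi a) := by
  simpa using integrableOn_Ioi_pow_mul_fermi_comp_add k 0 0 a

theorem hasSum_fermi {u : ℝ} (hu : 0 < u) :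
    HasSum (fun k : ℕ => (-1) ^ k * exp (-((k + 1) / 2 * u))) (fermi u) := by
  have hq : ‖-exp (-(u / 2))‖ < 1 := by
    rw [norm_neg, norm_of_nonneg (exp_pos _).le, exp_lt_one_iff]
    linarith
  have h := (hasSum_geometric_of_norm_lt_one hq).mul_left (exp (-(u / 2)))
  have hterm : (fun k : ℕ => exp (-(u / 2)) * (-exp (-(u / 2))) ^ k) =
      fun k : ℕ => (-1) ^ k * exp (-((k + 1) / 2 * u)) := by
    funext k
    rw [neg_pow, ← exp_nat_mul, mul_left_comm, ← exp_add]
    ring_nf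
  have hsum : exp (-(u / 2)) * (1 - -exp (-(u / 2)))⁻¹ = fermi u := by
    have h := exp_pos (u / 2)
    rw [fermi, sub_neg_eq_add, exp_neg]
    field_simp
    ring
  rwa [hterm, hsum] at h

theorem integrableOn_pow_mul_exp_neg_mul_Ioi (N : ℕ) {c : ℝ} (hc : 0 < c) :
    IntegrableOn (fun u => u ^ N * exp (-(c * u))) (Ioi 0) := by
  refine (integrableOn_rpow_mul_exp_neg_mul_rpow (s := N) (p := 1)
    (neg_one_lt_zero.trans_le N.cast_nonneg) one_pos hc).congr_fun (fun u _ => ?_) measurableSet_Ioi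
  simp only [rpow_natCast, rpow_one, neg_mul]

theorem integral_pow_mul_exp_neg_mul_Ioi (N : ℕ) {c : ℝ} (hc : 0 < c) :
    ∫ u in Ioi 0, u ^ N * exp (-(c * u)) = N ! / c ^ (N + 1) := by
  have h := integral_rpow_mul_exp_neg_mul_Ioi (a := N + 1) (by positivity) hc
  rw [add_sub_cancel_right, Gamma_nat_eq_factorial, ← Nat.cast_add_one, rpow_natCast] at h
  simp_rw [rpow_natCast] at h
  rw [h, one_div, inv_pow]
  ring

theorem hasSum_neg_one_pow_div_succ_pow {p : ℕ} (hp : p ≠ 0) {z : ℝ}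
    (hz : HasSum (fun n : ℕ => 1 / (n : ℝ) ^ p) z) :
    HasSum (fun k : ℕ => (-1) ^ k / ((k : ℝ) + 1) ^ p) ((1 - 2 / 2 ^ p) * z) := by
  have hsucc : HasSum (fun n : ℕ => 1 / ((n : ℝ) + 1) ^ p) z := by
    simpa [zero_pow hp] using (hasSum_nat_add_iff' 1).mpr hz
  have heven : HasSum (fun n : ℕ => 1 / ((2 * n : ℕ) : ℝ) ^ p) (z / 2 ^ p) := by
    refine (hz.div_const (2 ^ p)).congr_fun fun n => ?_
    push_cast
    ring
  have hodd : HasSum (fun n : ℕ => 1 / ((2 * n + 1 : ℕ) : ℝ) ^ p) (z - z / 2 ^ p) := by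
    have hs := hz.summable.comp_injective (i := fun n : ℕ => 2 * n + 1) fun a b h => by
      simpa using h
    have h := hz.unique (heven.even_add_odd hs.hasSum)
    exact (eq_sub_of_add_eq' h.symm).symm ▸ hs.hasSum
  convert HasSum.even_add_odd (f := fun k : ℕ => (-1) ^ k / ((k : ℝ) + 1) ^ p)
    (hodd.congr_fun fun n => ?_) ((hsucc.div_const (2 ^ p)).neg.congr_fun fun n => ?_) using 1
  · ring
  · simp [pow_mul]
  · push_cast
    rw [pow_succ, pow_mul, show 2 * (n : ℝ) + 1 + 1 = 2 * (n + 1) by ring, mul_pow]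
    ring

theorem summable_two_div_succ_pow {p : ℕ} (hp : 2 ≤ p) :
    Summable fun k : ℕ => (2 / ((k : ℝ) + 1)) ^ p := by
  have h := (summable_nat_add_iff 1).mpr (Real.summable_one_div_nat_pow.mpr hp)
  refine (h.mul_left (2 ^ p)).congr fun k => ?_
  push_cast
  ring

noncomputable def fermiMoment (k : ℕ) : ℝ := ∫ u in Ioi 0, u ^ k / k ! * fermi u

theorem hasSum_fermiMoment {N : ℕ} (hN : N ≠ 0) :
    HasSum (fun k : ℕ => (-1) ^ k * (2 / ((k : ℝ) + 1)) ^ (N + 1)) (fermiMoment N) := by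
  set F : ℕ → ℝ → ℝ := fun k u => u ^ N / N ! * ((-1) ^ k * exp (-((k + 1) / 2 * u)))
  have hc (k : ℕ) : 0 < ((k : ℝ) + 1) / 2 := by positivity
  have hF_eq (k : ℕ) :
      F k = fun u => (-1) ^ k / N ! * (u ^ N * exp (-((k + 1) / 2 * u))) := by
    funext u
    ring
  have hF_int (k : ℕ) : IntegrableOn (F k) (Ioi 0) := by
    rw [hF_eq]
    exact (integrableOn_pow_mul_exp_neg_mul_Ioi N (hc k)).const_mul _
  have hF_integral (k : ℕ) :
      ∫ u in Ioi 0, F k u = (-1) ^ k * (2 / ((k : ℝ) + 1)) ^ (N + 1) := by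
    rw [hF_eq, integral_const_mul, integral_pow_mul_exp_neg_mul_Ioi N (hc k), ← inv_div (2 : ℝ),
      inv_pow]
    field_simp
  have hF_norm (k : ℕ) : ∫ u in Ioi 0, ‖F k u‖ = (2 / ((k : ℝ) + 1)) ^ (N + 1) := by
    rw [setIntegral_congr_fun measurableSet_Ioi
      (g := fun u => (N ! : ℝ)⁻¹ * (u ^ N * exp (-((k + 1) / 2 * u)))) fun u hu => ?_]
    · rw [integral_const_mul, integral_pow_mul_exp_neg_mul_Ioi N (hc k), ← inv_div (2 : ℝ),
        inv_pow]
      field_simp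
    · have hu : (0 : ℝ) < u := hu
      simp only [F, norm_mul, norm_div, norm_pow, norm_eq_abs, abs_of_pos hu, RCLike.norm_natCast,
        norm_neg, norm_one, one_pow, abs_of_pos (exp_pos _), one_mul]
      ring
  have h := hasSum_integral_of_summable_integral_norm hF_int
    (by simpa only [hF_norm] using summable_two_div_succ_pow (p := N + 1) (by omega))
  have htsum : ∫ u in Ioi 0, ∑' k, F k u = fermiMoment N :=
    setIntegral_congr_fun measurableSet_Ioi fun u hu =>
      ((hasSum_fermi hu).mul_left (u ^ N / N !)).tsum_eq
  simpa only [hF_integral, htsum] using h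

theorem fermiMoment_two_mul_add_one (m : ℕ) :
    fermiMoment (2 * m + 1) = revMoment (m + 1) / 2 := by
  have hζ := hasSum_zeta_nat (k := m + 1) (by omega)
  have hη := (hasSum_neg_one_pow_div_succ_pow (by omega) hζ).mul_left (2 ^ (2 * (m + 1)))
  refine (hasSum_fermiMoment (N := 2 * m + 1) (by omega)).unique
    (hη.congr_fun fun k => ?_) |>.trans ?_
  · rw [div_pow, show 2 * m + 1 + 1 = 2 * (m + 1) by ring]
    ring
  · rw [revMoment, show 2 * (m + 1) - 1 = 2 * m + 1 by omega,
      show (-4 : ℝ) = -2 ^ 2 by norm_num, show (4 : ℝ) = 2 ^ 2 by norm_num, neg_mul,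
      neg_pow (2 ^ 2 * π ^ 2 : ℝ) (m + 1)]
    simp only [pow_succ, pow_mul, mul_pow]
    field_simp
    ring

theorem integral_Ioi_comp_add_right (f : ℝ → ℝ) (a t : ℝ) :
    ∫ x in Ioi a, f (x + t) = ∫ u in Ioi (a + t), f u := by
  have h := (measurePreserving_add_right volume t).setIntegral_preimage_emb
    (measurableEmbedding_addRight t) f (Ioi (a + t))
  rwa [preimage_add_const_Ioi, add_sub_cancel_right] at h

/-- The symmetry `fermi (-u) = 1 - fermi u` turns the two pieces into `∫_{-t}^0 (u + t)ⁿ du`. -/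
theorem intervalIntegral_pow_mul_fermi_add {n : ℕ} (hn : Odd n) (t : ℝ) :
    (∫ u in t..0, (u - t) ^ n * fermi u) + ∫ u in -t..0, (u + t) ^ n * fermi u =
      t ^ (n + 1) / (n + 1) := by
  have hreflect :
      ∫ u in t..0, (u - t) ^ n * fermi u = ∫ u in -t..0, (u + t) ^ n * (1 - fermi u) := by
    have h :=
      intervalIntegral.integral_comp_neg (a := -t) (b := 0) fun u => (u - t) ^ n * fermi u
    rw [neg_zero, neg_neg] at h
    rw [intervalIntegral.integral_symm, ← h, ← intervalIntegral.integral_neg]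
    refine intervalIntegral.integral_congr fun u _ => ?_
    simp only [fermi_neg, show -u - t = -(u + t) by ring, hn.neg_pow]
    ring
  rw [hreflect, ← intervalIntegral.integral_add (by apply Continuous.intervalIntegrable; fun_prop)
    (by apply Continuous.intervalIntegrable; fun_prop)]
  simp only [← mul_add, sub_add_cancel, mul_one]
  rw [intervalIntegral.integral_comp_add_right (fun u => u ^ n), integral_pow]
  simp [zero_pow (Nat.succ_ne_zero n)]

theorem integral_Ioi_pow_mul_K0 {n : ℕ} (hn : Odd n) (t : ℝ) :
    ∫ x in Ioi 0, x ^ n * K0 x t = t ^ (n + 1) / (n + 1) +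
      ((∫ u in Ioi 0, (u + t) ^ n * fermi u) + ∫ u in Ioi 0, (u - t) ^ n * fermi u) := by
  have hint (s a : ℝ) : IntegrableOn (fun u => (u - s) ^ n * fermi u) (Ioi a) := by
    simpa [← sub_eq_add_neg] using integrableOn_Ioi_pow_mul_fermi_comp_add n (-s) 0 a
  have hshift (s : ℝ) :
      ∫ x in Ioi 0, x ^ n * fermi (x + s) = ∫ u in Ioi s, (u - s) ^ n * fermi u := by
    simpa using integral_Ioi_comp_add_right (fun u => (u - s) ^ n * fermi u) 0 s
  have hsplit (s : ℝ) : ∫ u in Ioi s, (u - s) ^ n * fermi u =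
      (∫ u in s..0, (u - s) ^ n * fermi u) + ∫ u in Ioi 0, (u - s) ^ n * fermi u :=
    (intervalIntegral.integral_interval_add_Ioi (hint s s) (hint s 0)).symm
  calc ∫ x in Ioi 0, x ^ n * K0 x t
      = (∫ x in Ioi 0, x ^ n * fermi (x + t)) + ∫ x in Ioi 0, x ^ n * fermi (x + -t) := by
        simp_rw [K0_eq_fermi_add_fermi, sub_eq_add_neg, mul_add]
        exact integral_add
          (by simpa [IntegrableOn] using integrableOn_Ioi_pow_mul_fermi_comp_add n 0 t 0)
          (by simpa [IntegrableOn] using integrableOn_Ioi_pow_mul_fermi_comp_add n 0 (-t) 0)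
    _ = _ := by
        rw [hshift, hshift, hsplit, hsplit, ← intervalIntegral_pow_mul_fermi_add hn t]
        simp only [sub_neg_eq_add]
        ring

theorem add_pow_div_factorial {K : Type*} [Field K] [CharZero K] (x y : K) (n : ℕ) :
    (x + y) ^ n / n ! = ∑ j ∈ Finset.range (n + 1), x ^ j / j ! * (y ^ (n - j) / (n - j)!) := by
  rw [add_pow, Finset.sum_div]
  refine Finset.sum_congr rfl fun j hj => ?_
  have hj : j ≤ n := Nat.lt_succ_iff.mp (Finset.mem_range.mp hj)
  have hchoose : (n.choose j : K) ≠ 0 := Nat.cast_ne_zero.mpr (Nat.choose_pos hj).ne'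
  rw [← Nat.choose_mul_factorial_mul_factorial hj]
  push_cast
  field_simp

theorem integral_Ioi_add_pow_mul_fermi_div_factorial (n : ℕ) (c : ℝ) :
    (∫ u in Ioi 0, (u + c) ^ n * fermi u) / n ! =
      ∑ j ∈ Finset.range (n + 1), c ^ j / j ! * fermiMoment (n - j) := by
  rw [← integral_div]
  simp_rw [mul_div_right_comm _ (fermi _), add_comm _ c, add_pow_div_factorial, Finset.sum_mul,
    mul_assoc]
  rw [integral_finsetSum _ fun j _ => ?_]
  · simp_rw [integral_const_mul, fermiMoment]
  · refine Integrable.const_mul ?_ _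
    simp_rw [div_mul_eq_mul_div]
    exact (integrableOn_Ioi_pow_mul_fermi _ 0).div_const _

theorem integral_Ioi_pow_div_factorial_mul_K0 (l : ℕ) (t : ℝ) :
    ∫ x in Ioi 0, x ^ (2 * l + 1) / (2 * l + 1)! * K0 x t =
      ∑ m ∈ Finset.range (l + 2),
        revMoment m * t ^ (2 * (l + 1) - 2 * m) / (2 * (l + 1) - 2 * m)! := by
  set n := 2 * l + 1
  have hmoments : ∑ j ∈ Finset.range (n + 1),
      (t ^ j / j ! * fermiMoment (n - j) + (-t) ^ j / j ! * fermiMoment (n - j)) =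
      ∑ k ∈ Finset.range (l + 1), revMoment (l + 1 - k) * t ^ (2 * k) / (2 * k)! := by
    rw [show n + 1 = 2 * (l + 1) by omega,
      Finset.sum_range_two_mul_of_odd_eq_zero fun j hj => by rw [hj.neg_pow]; ring]
    refine Finset.sum_congr rfl fun k hk => ?_
    have hk : k ≤ l := Nat.lt_succ_iff.mp (Finset.mem_range.mp hk)
    rw [(even_two_mul k).neg_pow, show n - 2 * k = 2 * (l - k) + 1 by omega,
      fermiMoment_two_mul_add_one, show l - k + 1 = l + 1 - k by omega]
    ring
  have hfactorial : ((n + 1)! : ℝ) = (n + 1) * n ! := by push_cast [Nat.factorial_succ]; ring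
  calc ∫ x in Ioi 0, x ^ n / n ! * K0 x t
      = (t ^ (n + 1) / (n + 1) + ((∫ u in Ioi 0, (u + t) ^ n * fermi u) +
          ∫ u in Ioi 0, (u + -t) ^ n * fermi u)) / n ! := by
        simp_rw [div_mul_eq_mul_div]
        rw [integral_div, integral_Ioi_pow_mul_K0 (odd_two_mul_add_one l)]
        simp_rw [sub_eq_add_neg]
        rfl
    _ = t ^ (2 * (l + 1)) / (2 * (l + 1))! +
          ∑ k ∈ Finset.range (l + 1), revMoment (l + 1 - k) * t ^ (2 * k) / (2 * k)! := by
        rw [add_div, add_div, integral_Ioi_add_pow_mul_fermi_div_factorial,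
          integral_Ioi_add_pow_mul_fermi_div_factorial, ← Finset.sum_add_distrib, hmoments,
          show 2 * (l + 1) = n + 1 by omega, hfactorial]
        field_simp
    _ = ∑ k ∈ Finset.range (l + 2), revMoment (l + 1 - k) * t ^ (2 * k) / (2 * k)! := by
        rw [Finset.sum_range_succ _ (l + 1), Nat.sub_self, revMoment_zero, one_mul, add_comm]
    _ = _ := by
        rw [← Finset.sum_range_reflect]
        refine Finset.sum_congr rfl fun m hm => ?_
        have hm : m ≤ l + 1 := Nat.lt_succ_iff.mp (Finset.mem_range.mp hm)
        rw [show l + 1 - (l + 2 - 1 - m) = m by omega,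
          show 2 * (l + 2 - 1 - m) = 2 * (l + 1) - 2 * m by omega]

theorem stmt2 (β : ℕ → ℝ) (hβ0 : β 0 = 1)
    (hβ : ∀ p : ℕ, 1 ≤ p →
      ∑ m ∈ Finset.range (p + 1),
        ((-2 * π ^ 2) ^ m /
            ((Nat.factorial m : ℝ) * (Nat.doubleFactorial (2 * m + 1) : ℝ))) * β (p - m) = 0)
    (i : ℕ) (hi : 1 ≤ i) (t : ℝ) :
    (∫ x in Set.Ioi (0:ℝ), x ^ (2 * i - 1) / (Nat.factorial (2 * i - 1) : ℝ) * K0 x t) =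
      ∑ m ∈ Finset.range (i + 1),
        β m * t ^ (2 * i - 2 * m) / (Nat.factorial (2 * i - 2 * m) : ℝ) := by
  obtain ⟨l, rfl⟩ : ∃ l, i = l + 1 := ⟨i - 1, by omega⟩
  have hβ_eq : β = revMoment :=
    eq_of_sum_range_mul_sub_eq_zero (by simp) (hβ0.trans revMoment_zero.symm) hβ
      fun p hp => sum_range_mul_revMoment_eq_zero hp
  rw [hβ_eq, show 2 * (l + 1) - 1 = 2 * l + 1 by omega]
  exact integral_Ioi_pow_div_factorial_mul_K0 l t
end

section
/- Let R ≥ 0 and let z₁, z₂ be real numbers with z₁, z₂ > √(2R) and z₁ ≠ z₂. Set x₁ = √(z₁² − 2R) and x₂ = √(z₂² − 2R). Then ∫₀^R z₁·z₂·(z₁² − 2r)^{−3/2}·(z₂² − 2r)^{−3/2} dr = (z₁ z₂)/(x₁ x₂ (x₁ − x₂)²) − 1/(z₁ − z₂)². -/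
open Real MeasureTheory

/-!
With `x(r) = √(z² - 2r)` one has `x' = -1/x`, and for two such functions the integrand
`z₁ z₂ (x₁ x₂)⁻³` is the derivative of `z₁ z₂ / (x₁ x₂ (x₁ - x₂)²)` in `r`. At `r = 0`
we have `xᵢ = zᵢ`, and this primitive equals `1 / (z₁ - z₂)²`.
-/

lemma rpow_neg_three_halves {x : ℝ} (hx : 0 ≤ x) : x ^ (-(3:ℝ) / 2) = (√x ^ 3)⁻¹ := by
  rw [sqrt_eq_rpow, ← rpow_natCast, ← rpow_mul hx, ← rpow_neg hx]
  norm_num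

lemma hasDerivAt_sqrt_sub_two_mul {c r : ℝ} (h : 2 * r < c) :
    HasDerivAt (fun x => √(c - 2 * x)) (-(√(c - 2 * r))⁻¹) r := by
  have hin : HasDerivAt (fun x : ℝ => c - 2 * x) (-2) r := by
    simpa using ((hasDerivAt_id r).const_mul 2).const_sub c
  have hsqrt : √(c - 2 * r) ≠ 0 := sqrt_ne_zero'.2 (by linarith)
  refine ((hasDerivAt_sqrt (by linarith)).comp r hin).congr_deriv ?_
  field_simp

/-- The cancellation behind the lemma: `s' = -1/s` and `t' = -1/t` give
`(s t (s - t)²)' = -(s - t)⁴ / (s t)`. -/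
lemma HasDerivAt.inv_mul_mul_sub_sq {s t : ℝ → ℝ} {r : ℝ}
    (hs : HasDerivAt s (-(s r)⁻¹) r) (ht : HasDerivAt t (-(t r)⁻¹) r)
    (hs₀ : s r ≠ 0) (ht₀ : t r ≠ 0) (hst : s r ≠ t r) :
    HasDerivAt (fun x => (s x * t x * (s x - t x) ^ 2)⁻¹) ((s r * t r) ^ 3)⁻¹ r := by
  have hsub : s r - t r ≠ 0 := sub_ne_zero.2 hst
  refine (((hs.mul ht).mul ((hs.sub ht).pow 2)).inv (by simp [*])).congr_deriv ?_
  simp only [Pi.mul_apply, Pi.sub_apply, Pi.pow_apply]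
  field_simp
  ring

lemma two_mul_lt_sq_of_sqrt_lt {R z r : ℝ} (hz : √(2 * R) < z) (hr : r ∈ Set.uIcc 0 R) :
    2 * r < z ^ 2 := by
  have hz₀ : 0 < z := (sqrt_nonneg _).trans_lt hz
  have hr' : r ≤ max 0 R := hr.2
  rcases le_total 0 R with hR | hR
  · have := sq_sqrt (by linarith : 0 ≤ 2 * R)
    nlinarith [sqrt_nonneg (2 * R), max_eq_right hR]
  · nlinarith [max_eq_left hR]

theorem stmt7_general (R z₁ z₂ : ℝ)
    (h1 : Real.sqrt (2 * R) < z₁) (h2 : Real.sqrt (2 * R) < z₂) (hne : z₁ ≠ z₂) :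
    (∫ r in (0:ℝ)..R,
        z₁ * z₂ * (z₁ ^ 2 - 2 * r) ^ (-(3:ℝ) / 2) * (z₂ ^ 2 - 2 * r) ^ (-(3:ℝ) / 2)) =
      z₁ * z₂ / (Real.sqrt (z₁ ^ 2 - 2 * R) * Real.sqrt (z₂ ^ 2 - 2 * R) *
          (Real.sqrt (z₁ ^ 2 - 2 * R) - Real.sqrt (z₂ ^ 2 - 2 * R)) ^ 2) -
        1 / (z₁ - z₂) ^ 2 := by
  have hz₁ : 0 < z₁ := (sqrt_nonneg _).trans_lt h1
  have hz₂ : 0 < z₂ := (sqrt_nonneg _).trans_lt h2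
  set F : ℝ → ℝ := fun r =>
    z₁ * z₂ * (√(z₁ ^ 2 - 2 * r) * √(z₂ ^ 2 - 2 * r) * (√(z₁ ^ 2 - 2 * r) - √(z₂ ^ 2 - 2 * r)) ^ 2)⁻¹
  have hderiv : ∀ r ∈ Set.uIcc 0 R, HasDerivAt F
      (z₁ * z₂ * (z₁ ^ 2 - 2 * r) ^ (-(3:ℝ) / 2) * (z₂ ^ 2 - 2 * r) ^ (-(3:ℝ) / 2)) r := by
    intro r hr
    have hr₁ := two_mul_lt_sq_of_sqrt_lt h1 hr
    have hr₂ := two_mul_lt_sq_of_sqrt_lt h2 hr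
    have hsqrt_ne : √(z₁ ^ 2 - 2 * r) ≠ √(z₂ ^ 2 - 2 * r) := by
      rw [Ne, sqrt_inj (by linarith) (by linarith), sub_left_inj, sq_eq_sq₀ hz₁.le hz₂.le]
      exact hne
    refine (((hasDerivAt_sqrt_sub_two_mul hr₁).inv_mul_mul_sub_sq (hasDerivAt_sqrt_sub_two_mul hr₂)
      (sqrt_ne_zero'.2 (by linarith)) (sqrt_ne_zero'.2 (by linarith)) hsqrt_ne).const_mul
      (z₁ * z₂)).congr_deriv ?_
    rw [rpow_neg_three_halves (by linarith), rpow_neg_three_halves (by linarith)]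
    ring
  have hint : IntervalIntegrable (fun r : ℝ =>
      z₁ * z₂ * (z₁ ^ 2 - 2 * r) ^ (-(3:ℝ) / 2) * (z₂ ^ 2 - 2 * r) ^ (-(3:ℝ) / 2)) volume 0 R := by
    refine ContinuousOn.intervalIntegrable fun r hr => ContinuousAt.continuousWithinAt ?_
    have hr₁ : z₁ ^ 2 - 2 * r ≠ 0 := by linarith [two_mul_lt_sq_of_sqrt_lt h1 hr]
    have hr₂ : z₂ ^ 2 - 2 * r ≠ 0 := by linarith [two_mul_lt_sq_of_sqrt_lt h2 hr]
    fun_prop (disch := exact Or.inl ‹_›)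
  have hF₀ : F 0 = 1 / (z₁ - z₂) ^ 2 := by
    simp only [F, mul_zero, sub_zero, sqrt_sq hz₁.le, sqrt_sq hz₂.le]
    have := sub_ne_zero.2 hne
    field_simp
  rw [intervalIntegral.integral_eq_sub_of_hasDerivAt hderiv hint, hF₀]
  rfl

theorem stmt7 (R z₁ z₂ : ℝ) (hR : 0 ≤ R)
    (h1 : Real.sqrt (2 * R) < z₁) (h2 : Real.sqrt (2 * R) < z₂) (hne : z₁ ≠ z₂) :
    (∫ r in (0:ℝ)..R,
        z₁ * z₂ * (z₁ ^ 2 - 2 * r) ^ (-(3:ℝ) / 2) * (z₂ ^ 2 - 2 * r) ^ (-(3:ℝ) / 2)) =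
      z₁ * z₂ / (Real.sqrt (z₁ ^ 2 - 2 * R) * Real.sqrt (z₂ ^ 2 - 2 * R) *
          (Real.sqrt (z₁ ^ 2 - 2 * R) - Real.sqrt (z₂ ^ 2 - 2 * R)) ^ 2) -
        1 / (z₁ - z₂) ^ 2 :=
  stmt7_general R z₁ z₂ h1 h2 hne
end
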